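/- arXiv:1611.06538 — 6 statements merged into one kernel-verified Lean document; each statement's English description precedes it below -/
import Mathlib

section
/- For fixed integer t_r ≥ 0, the delayed-CSIT degrees of freedom is strictly increasing in the transmit-side cache size: for every integer t_t ≥ 1, d_D(t_t+1, t_r) > d_D(t_t, t_r). -/
/-!
`d_D(t_t, t_r)` is the harmonic mean of `t_r + 1, …, t_r + t_t`, so it is less than `t_r + t_t + 1`.
With `S` the old sum and `a = 1/(t_r + t_t + 1)`, the new value `(t_t + 1) / (S + a)` is the
mediant of `t_t / S` and `1 / a = t_r + t_t + 1`, hence lies strictly above the smaller one, `t_t / S`.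
-/

/-- Delayed-CSIT degrees of freedom: `d_D(t_t, t_r) = t_t / (∑_{j=t_r+1}^{t_r+t_t} 1/j)`. -/
noncomputable def dD (tt tr : ℕ) : ℝ :=
  (tt : ℝ) / ∑ j ∈ Finset.Icc (tr + 1) (tr + tt), (1 : ℝ) / (j : ℝ)

open Finset

lemma div_lt_add_div_add {K : Type*} [Field K] [LinearOrder K] [IsStrictOrderedRing K]
    {a b c d : K} (hb : 0 < b) (hd : 0 < d) (h : a * d < c * b) :
    a / b < (a + c) / (b + d) := by
  rw [div_lt_div_iff₀ hb (add_pos hb hd)]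
  linarith

lemma div_lt_sum_Icc_one_div (tt tr : ℕ) (htt : 1 ≤ tt) :
    (tt : ℝ) / (tr + tt + 1) < ∑ j ∈ Icc (tr + 1) (tr + tt), (1 : ℝ) / j := by
  have hconst : ∑ _j ∈ Icc (tr + 1) (tr + tt), (1 : ℝ) / (tr + tt + 1)
      = (tt : ℝ) / (tr + tt + 1) := by
    rw [sum_const, Nat.card_Icc, Nat.add_sub_add_right, Nat.add_sub_cancel_left, nsmul_eq_mul,
      mul_one_div]
  rw [← hconst]
  refine sum_lt_sum_of_nonempty (nonempty_Icc.mpr (by omega)) fun j hj ↦ ?_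
  have hj := mem_Icc.mp hj
  have hj_pos : (0 : ℝ) < j := by exact_mod_cast hj.1.trans_lt' (Nat.succ_pos tr)
  have hj_le : (j : ℝ) ≤ tr + tt := by exact_mod_cast hj.2
  exact one_div_lt_one_div_of_lt hj_pos (by linarith)

lemma sum_Icc_one_div_succ (tt tr : ℕ) :
    ∑ j ∈ Icc (tr + 1) (tr + (tt + 1)), (1 : ℝ) / j
      = ∑ j ∈ Icc (tr + 1) (tr + tt), (1 : ℝ) / j + 1 / (tr + tt + 1) := by
  rw [← add_assoc, sum_Icc_succ_top (by omega)]
  push_cast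
  rfl

/-- For fixed `t_r ≥ 0`, `d_D` is strictly increasing in `t_t`:
`d_D(t_t+1, t_r) > d_D(t_t, t_r)` for every `t_t ≥ 1`. -/
theorem stmt_3 (tt tr : ℕ) (htt : 1 ≤ tt) :
    dD (tt + 1) tr > dD tt tr := by
  have hS := div_lt_sum_Icc_one_div tt tr htt
  have hS_pos : 0 < ∑ j ∈ Icc (tr + 1) (tr + tt), (1 : ℝ) / j :=
    hS.trans_le' (by positivity)
  unfold dD
  rw [sum_Icc_one_div_succ, Nat.cast_succ]
  refine div_lt_add_div_add hS_pos (by positivity) ?_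
  rwa [mul_one_div, one_mul]
end

section
/- Under delayed CSIT, a unit of cache at the receive side is strictly more valuable than a unit at the transmit side: for all integers t_t ≥ 1 and t_r ≥ 0, d_D(t_t, t_r+1) > d_D(t_t+1, t_r). -/
open Finset

noncomputable def harmonicWindow (a n : ℕ) : ℝ :=
  ∑ j ∈ Icc (a + 1) (a + n), (1 : ℝ) / j

theorem dD_eq_div_harmonicWindow (tt tr : ℕ) : dD tt tr = tt / harmonicWindow tr tt := rfl

namespace harmonicWindow

theorem pos {a n : ℕ} (hn : 0 < n) : 0 < harmonicWindow a n :=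
  sum_pos (fun j hj => one_div_pos.mpr (Nat.cast_pos.mpr (by grind)))
    (nonempty_Icc.mpr (by omega))

theorem succ_right (a n : ℕ) :
    harmonicWindow a (n + 1) = 1 / (a + 1) + harmonicWindow (a + 1) n := by
  rw [harmonicWindow, Icc_eq_cons_Ioc (by omega), sum_cons, ← Icc_add_one_left_eq_Ioc,
    harmonicWindow, Nat.cast_succ, Nat.add_right_comm a 1 n]
  rfl

theorem lt_div {a n : ℕ} (ha : 0 < a) (hn : 0 < n) : harmonicWindow a n < n / a := by
  have hterm : ∀ j ∈ Icc (a + 1) (a + n), (1 : ℝ) / j < 1 / a := fun j hj => by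
    have haj : (a : ℝ) < j := by exact_mod_cast (mem_Icc.mp hj).1
    exact one_div_lt_one_div_of_lt (by exact_mod_cast ha) haj
  calc harmonicWindow a n < ∑ _j ∈ Icc (a + 1) (a + n), (1 : ℝ) / a :=
        sum_lt_sum_of_nonempty (nonempty_Icc.mpr (by omega)) hterm
    _ = n / a := by
        rw [sum_const, Nat.card_Icc, Nat.add_right_comm, Nat.add_sub_cancel_left,
          nsmul_eq_mul, mul_one_div]

end harmonicWindow

/-- Under delayed CSIT a unit of receive-side cache beats a unit of transmit-side cache:
`d_D(t_t, t_r+1) > d_D(t_t+1, t_r)` for all `t_t ≥ 1`, `t_r ≥ 0`. -/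
theorem stmt_5 (tt tr : ℕ) (htt : 1 ≤ tt) :
    dD tt (tr + 1) > dD (tt + 1) tr := by
  rw [dD_eq_div_harmonicWindow, dD_eq_div_harmonicWindow, harmonicWindow.succ_right]
  set H := harmonicWindow (tr + 1) tt
  have hH : 0 < H := harmonicWindow.pos htt
  have hlt : H < tt / (tr + 1 : ℕ) := harmonicWindow.lt_div tr.succ_pos htt
  push_cast at hlt ⊢
  rw [gt_iff_lt, div_lt_div_iff₀ (by positivity) hH, mul_add, mul_one_div]
  linarith
end

section
/- For a fixed aggregate normalized cache size s ≥ 2, the delayed-CSIT degrees of freedom is strictly increasing in the fraction of cache placed at the receivers: for all integers k, k' with 0 ≤ k < k' ≤ s − 1, one has (s − k) / (∑_{j=k+1}^{s} 1/j) < (s − k') / (∑_{j=k'+1}^{s} 1/j). (Here k and k' play the role of the receive-side cache size t_r, and s − k, s − k' play the role of the transmit-side cache size t_t, so that the total cache s = t_t + t_r is held fixed.) -/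
/-!
`(s - k) / ∑_{j=k+1}^{s} 1/j` is the harmonic mean of `k + 1, …, s`, and dropping the smallest
element `k + 1` of this list raises its harmonic mean: the reciprocal `1/(k+1)` being dropped
exceeds every remaining reciprocal `1/j`, hence exceeds their average.
-/

open Finset

noncomputable def harmonicTail (k s : ℕ) : ℝ :=
  ∑ j ∈ Icc (k + 1) s, (1 : ℝ) / j

lemma harmonicTail_pos {k s : ℕ} (h : k < s) : 0 < harmonicTail k s := by
  refine sum_pos (fun j hj => ?_) ⟨k + 1, by simp; omega⟩
  have : 0 < j := by simp only [mem_Icc] at hj; omega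
  positivity

lemma harmonicTail_eq_inv_add {k s : ℕ} (h : k < s) :
    harmonicTail k s = 1 / (k + 1 : ℝ) + harmonicTail (k + 1) s := by
  rw [harmonicTail, ← insert_Icc_add_one_left_eq_Icc (by omega : k + 1 ≤ s),
    sum_insert (by simp), harmonicTail]
  push_cast
  rfl

lemma harmonicTail_lt {m s : ℕ} (hm : 0 < m) (h : m < s) :
    harmonicTail m s < (s - m : ℝ) / m := by
  have hterm : ∀ j ∈ Icc (m + 1) s, (1 : ℝ) / j < 1 / m := fun j hj => by
    simp only [mem_Icc] at hj
    gcongr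
    exact_mod_cast hj.1
  calc harmonicTail m s < ∑ _j ∈ Icc (m + 1) s, (1 : ℝ) / m :=
        sum_lt_sum_of_nonempty ⟨s, by simp; omega⟩ hterm
    _ = (s - m : ℝ) / m := by
        rw [sum_const, Nat.card_Icc, nsmul_eq_mul, Nat.add_sub_add_right,
          Nat.cast_sub h.le]
        ring

lemma div_harmonicTail_lt_succ {k s : ℕ} (h : k + 1 < s) :
    (s - k : ℝ) / harmonicTail k s < (s - (k + 1 : ℕ) : ℝ) / harmonicTail (k + 1) s := by
  have hpos := harmonicTail_pos h
  have hlt := harmonicTail_lt k.succ_pos h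
  rw [harmonicTail_eq_inv_add (by omega), div_lt_div_iff₀ (by positivity) hpos]
  rw [lt_div_iff₀ (by positivity)] at hlt
  push_cast at hlt ⊢
  field_simp
  linarith

theorem stmt_6_general (s k k' : ℕ) (hkk' : k < k') (hk' : k' ≤ s - 1) :
    ((s : ℝ) - (k : ℝ)) / ∑ j ∈ Finset.Icc (k + 1) s, (1 : ℝ) / (j : ℝ) <
      ((s : ℝ) - (k' : ℝ)) / ∑ j ∈ Finset.Icc (k' + 1) s, (1 : ℝ) / (j : ℝ) := by
  have hmono : StrictMonoOn (fun k : ℕ => (s - k : ℝ) / harmonicTail k s) (Set.Iic (s - 1)) :=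
    strictMonoOn_Iic_of_lt_succ fun m hm => by
      rw [Order.succ_eq_add_one]
      exact div_harmonicTail_lt_succ (by omega)
  exact hmono (show k ≤ s - 1 by omega) hk' hkk'

/-- For fixed aggregate cache `s ≥ 2`, the delayed-CSIT DoF
`(s − t_r)/(∑_{j=t_r+1}^{s} 1/j)` is strictly increasing in the receive-side share:
for integers `0 ≤ k < k' ≤ s − 1`,
`(s − k)/(∑_{j=k+1}^{s} 1/j) < (s − k')/(∑_{j=k'+1}^{s} 1/j)`. -/
theorem stmt_6 (s k k' : ℕ) (hs : 2 ≤ s) (hkk' : k < k') (hk' : k' ≤ s - 1) :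
    ((s : ℝ) - (k : ℝ)) / ∑ j ∈ Finset.Icc (k + 1) s, (1 : ℝ) / (j : ℝ) <
      ((s : ℝ) - (k' : ℝ)) / ∑ j ∈ Finset.Icc (k' + 1) s, (1 : ℝ) / (j : ℝ) :=
  stmt_6_general s k k' hkk' hk'
end

section
/- Under mixed CSIT with any positive training/feedback fraction, receive-side cache is strictly more valuable than transmit-side cache: for all integers t_t ≥ 1, t_r ≥ 0 and every real α ∈ (0,1], d_M(t_t, t_r+1, α) > d_M(t_t+1, t_r, α). (Both configurations have the same aggregate normalized cache t_t + t_r + 1.) -/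
/-- Mixed-CSIT degrees of freedom:
`d_M(t_t, t_r, α) = (t_t + t_r) + α·(d_D(t_t,t_r) − (t_t + t_r))`. -/
noncomputable def dM (tt tr : ℕ) (α : ℝ) : ℝ :=
  ((tt : ℝ) + (tr : ℝ)) + α * (dD tt tr - ((tt : ℝ) + (tr : ℝ)))

/-!
The two configurations have the same total cache `t_t + t_r + 1`, so
`d_M(t_t, t_r + 1, α) - d_M(t_t + 1, t_r, α) = α (d_D(t_t, t_r + 1) - d_D(t_t + 1, t_r))`, and it
suffices to compare the delayed-CSIT values. With `H = ∑_{j=t_r+2}^{t_r+t_t+1} 1/j` these are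
`t_t / H` and `(t_t + 1) / (1/(t_r+1) + H)`; the second is smaller exactly when
`H < t_t / (t_r + 1)`, which holds because each of the `t_t` terms of `H` is below `1/(t_r+1)`.
-/

open Finset

lemma sum_Icc_one_div_lt (a n : ℕ) (ha : 0 < a) (hn : 0 < n) :
    ∑ j ∈ Icc (a + 1) (a + n), (1 : ℝ) / j < n / a := by
  have hne : (Icc (a + 1) (a + n)).Nonempty := nonempty_Icc.mpr (by omega)
  calc ∑ j ∈ Icc (a + 1) (a + n), (1 : ℝ) / j
      < ∑ _j ∈ Icc (a + 1) (a + n), (1 : ℝ) / a := by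
        refine sum_lt_sum_of_nonempty hne fun j hj ↦ ?_
        have haj : a < j := by simp only [mem_Icc] at hj; omega
        exact one_div_lt_one_div_of_lt (by exact_mod_cast ha) (by exact_mod_cast haj)
    _ = n / a := by
        rw [sum_const, Nat.card_Icc, nsmul_eq_mul, show a + n + 1 - (a + 1) = n by omega]
        ring

lemma sum_Icc_one_div_succ_right (r n : ℕ) :
    ∑ j ∈ Icc (r + 1) (r + (n + 1)), (1 : ℝ) / j
      = 1 / (r + 1) + ∑ j ∈ Icc (r + 1 + 1) (r + 1 + n), (1 : ℝ) / j := by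
  rw [show r + (n + 1) = r + 1 + n by omega, ← insert_Icc_add_one_left_eq_Icc (by omega),
    sum_insert (by simp only [mem_Icc]; omega), Nat.cast_succ]

lemma add_one_div_add_lt_div {n x S : ℝ} (hx : 0 < x) (hS : 0 < S) (h : S < n * x) :
    (n + 1) / (x + S) < n / S := by
  rw [div_lt_div_iff₀ (by positivity) hS]
  linarith

lemma dD_succ_lt_dD_succ (tt tr : ℕ) (htt : 1 ≤ tt) : dD (tt + 1) tr < dD tt (tr + 1) := by
  set H := ∑ j ∈ Icc (tr + 1 + 1) (tr + 1 + tt), (1 : ℝ) / j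
  have hH_pos : 0 < H :=
    sum_pos (fun j hj ↦ one_div_pos.mpr (Nat.cast_pos.mpr (by simp only [mem_Icc] at hj; omega)))
      (nonempty_Icc.mpr (by omega))
  have hH_lt : H < tt * (1 / ((tr : ℝ) + 1)) :=
    (sum_Icc_one_div_lt (tr + 1) tt (by omega) htt).trans_eq (by push_cast; ring)
  have hdD_succ : dD (tt + 1) tr = (tt + 1) / (1 / ((tr : ℝ) + 1) + H) := by
    rw [dD, sum_Icc_one_div_succ_right, Nat.cast_succ]
  rw [hdD_succ]
  exact add_one_div_add_lt_div (by positivity) hH_pos hH_lt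

theorem stmt_9_general (tt tr : ℕ) (htt : 1 ≤ tt) (α : ℝ) (hα0 : 0 < α) :
    dM tt (tr + 1) α > dM (tt + 1) tr α := by
  have hdD := mul_lt_mul_of_pos_left (dD_succ_lt_dD_succ tt tr htt) hα0
  simp only [dM, Nat.cast_succ]
  linarith

/-- Under mixed CSIT with any positive training fraction, receive-side cache is strictly
more valuable: for `t_t ≥ 1`, `t_r ≥ 0`, and `α ∈ (0,1]`,
`d_M(t_t, t_r+1, α) > d_M(t_t+1, t_r, α)`. -/
theorem stmt_9 (tt tr : ℕ) (htt : 1 ≤ tt) (α : ℝ) (hα0 : 0 < α) (hα1 : α ≤ 1) :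
    dM tt (tr + 1) α > dM (tt + 1) tr α :=
  stmt_9_general tt tr htt α hα0
end

section
/- Under mixed CSIT, increasing the transmit-side cache strictly increases the degrees of freedom: for all integers t_t ≥ 1, t_r ≥ 0 and every real α ∈ [0,1], d_M(t_t+1, t_r, α) > d_M(t_t, t_r, α). -/
lemma div_lt_add_one_div_add {t S c : ℝ} (hS : 0 < S) (hc : 0 < c) (h : t * c < S) :
    t / S < (t + 1) / (S + c) := by
  rw [div_lt_div_iff₀ hS (by positivity)]
  linarith

lemma mul_inv_lt_sum_Icc_inv (tt tr : ℕ) (htt : 1 ≤ tt) :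
    (tt : ℝ) * (1 / ((tr + tt + 1 : ℕ) : ℝ)) < ∑ j ∈ Finset.Icc (tr + 1) (tr + tt), (1 : ℝ) / j := by
  have hcard : (Finset.Icc (tr + 1) (tr + tt)).card = tt := by
    rw [Nat.card_Icc]; omega
  have hterm : ∀ j ∈ Finset.Icc (tr + 1) (tr + tt), (1 : ℝ) / ((tr + tt + 1 : ℕ) : ℝ) < 1 / j := by
    intro j hj
    rw [Finset.mem_Icc] at hj
    apply one_div_lt_one_div_of_lt
    · exact_mod_cast (by omega : 0 < j)
    · exact_mod_cast (by omega : j < tr + tt + 1)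
  calc (tt : ℝ) * (1 / ((tr + tt + 1 : ℕ) : ℝ))
      = ∑ _j ∈ Finset.Icc (tr + 1) (tr + tt), (1 : ℝ) / ((tr + tt + 1 : ℕ) : ℝ) := by
        rw [Finset.sum_const, hcard, nsmul_eq_mul]
    _ < ∑ j ∈ Finset.Icc (tr + 1) (tr + tt), (1 : ℝ) / j :=
        Finset.sum_lt_sum_of_nonempty (Finset.nonempty_Icc.2 (by omega)) hterm

lemma dD_lt_dD_succ (tt tr : ℕ) (htt : 1 ≤ tt) : dD tt tr < dD (tt + 1) tr := by
  have hsum : 0 < ∑ j ∈ Finset.Icc (tr + 1) (tr + tt), (1 : ℝ) / j :=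
    lt_of_le_of_lt (by positivity) (mul_inv_lt_sum_Icc_inv tt tr htt)
  have hsplit : ∑ j ∈ Finset.Icc (tr + 1) (tr + (tt + 1)), (1 : ℝ) / j
      = ∑ j ∈ Finset.Icc (tr + 1) (tr + tt), (1 : ℝ) / j + 1 / ((tr + tt + 1 : ℕ) : ℝ) :=
    Finset.sum_Icc_succ_top (a := tr + 1) (b := tr + tt) (by omega) _
  rw [dD, dD, hsplit, Nat.cast_succ]
  exact div_lt_add_one_div_add hsum (by positivity) (mul_inv_lt_sum_Icc_inv tt tr htt)

lemma dM_succ_sub_dM (tt tr : ℕ) (α : ℝ) :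
    dM (tt + 1) tr α - dM tt tr α = (1 - α) + α * (dD (tt + 1) tr - dD tt tr) := by
  simp only [dM, Nat.cast_succ]
  ring

/-- Under mixed CSIT, more transmit-side cache strictly increases the DoF:
`d_M(t_t+1, t_r, α) > d_M(t_t, t_r, α)` for `t_t ≥ 1`, `t_r ≥ 0`, `α ∈ [0,1]`. -/
theorem stmt_11 (tt tr : ℕ) (htt : 1 ≤ tt) (α : ℝ) (hα0 : 0 ≤ α) (hα1 : α ≤ 1) :
    dM (tt + 1) tr α > dM tt tr α := by
  have hdD := sub_pos.2 (dD_lt_dD_succ tt tr htt)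
  suffices 0 < (1 - α) + α * (dD (tt + 1) tr - dD tt tr) by
    rw [← dM_succ_sub_dM] at this
    linarith
  rcases hα0.eq_or_lt with rfl | hα
  · norm_num
  · exact add_pos_of_nonneg_of_pos (sub_nonneg.2 hα1) (mul_pos hα hdD)
end

section
/- With equal cache sizes at both sides (t_t = t_r = t), the DoF loss of delayed CSIT relative to full CSIT is strictly increasing in the aggregate cache size: for every integer t ≥ 1, one has 2(t+1) − d_D(t+1, t+1) > 2t − d_D(t, t). (Equivalently, the magnitude of the slope of the mixed-CSIT DoF as a function of α grows with the total cache size when β = t_r/t_t = 1.) -/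
/-!
Write `d_D(t, t) = t / H t` with `H t = ∑_{j=t+1}^{2t} 1/j`. Passing from `t` to `t + 1` drops
`1/(t+1)` and adds `1/(2t+1) + 1/(2t+2)`, so `H` is strictly increasing with `H 1 = 1/2`. Hence
`d_D(t+1, t+1) - d_D(t, t) ≤ (t+1)/H(t+1) - t/H(t+1) = 1/H(t+1) < 2`.
-/

open Finset

noncomputable def harmonicBlock (t : ℕ) : ℝ :=
  ∑ j ∈ Icc (t + 1) (t + t), (1 : ℝ) / j

lemma dD_self (t : ℕ) : dD t t = t / harmonicBlock t := rfl

lemma harmonicBlock_succ (t : ℕ) :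
    harmonicBlock (t + 1) = harmonicBlock t + 1 / ((2 * t + 1) * (2 * t + 2)) := by
  have hsplit : (1 : ℝ) / (t + 1) + harmonicBlock (t + 1) =
      harmonicBlock t + 1 / (2 * t + 1) + 1 / (2 * t + 2) := by
    have hcast : (1 : ℝ) / (t + 1) = 1 / ((t + 1 : ℕ) : ℝ) := by norm_cast
    rw [hcast, harmonicBlock, harmonicBlock, Icc_add_one_left_eq_Ioc,
      add_sum_Ioc_eq_sum_Icc (f := fun j : ℕ ↦ (1 : ℝ) / j) (by omega),
      show t + 1 + (t + 1) = t + t + 1 + 1 by ring, sum_Icc_succ_top (by omega),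
      sum_Icc_succ_top (by omega)]
    push_cast
    ring
  field_simp at hsplit ⊢
  linear_combination hsplit

lemma harmonicBlock_one : harmonicBlock 1 = 1 / 2 := by
  norm_num [harmonicBlock]

lemma strictMono_harmonicBlock : StrictMono harmonicBlock :=
  strictMono_nat_of_lt_succ fun t ↦ by
    rw [harmonicBlock_succ, lt_add_iff_pos_right]
    positivity

lemma one_half_le_harmonicBlock {t : ℕ} (ht : 1 ≤ t) : 1 / 2 ≤ harmonicBlock t :=
  harmonicBlock_one ▸ strictMono_harmonicBlock.monotone ht

lemma dD_succ_self_sub_dD_self_lt_two {t : ℕ} (ht : 1 ≤ t) :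
    dD (t + 1) (t + 1) - dD t t < 2 := by
  have hH : 1 / 2 ≤ harmonicBlock t := one_half_le_harmonicBlock ht
  have hH' : harmonicBlock t < harmonicBlock (t + 1) := strictMono_harmonicBlock (lt_add_one t)
  have hpos : 0 < harmonicBlock t := by linarith
  rw [dD_self, dD_self]
  calc ((t + 1 : ℕ) : ℝ) / harmonicBlock (t + 1) - t / harmonicBlock t
      ≤ (t + 1) / harmonicBlock (t + 1) - t / harmonicBlock (t + 1) := by
        push_cast
        gcongr
    _ = 1 / harmonicBlock (t + 1) := by ring
    _ < 2 := by rw [div_lt_iff₀ (by linarith)]; linarith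

/-- With `t_t = t_r = t`, the DoF loss of delayed CSIT relative to full CSIT is strictly
increasing in the aggregate cache size: for every `t ≥ 1`,
`2(t+1) − d_D(t+1, t+1) > 2t − d_D(t, t)`. -/
theorem stmt_13 (t : ℕ) (ht : 1 ≤ t) :
    2 * ((t : ℝ) + 1) - dD (t + 1) (t + 1) > 2 * (t : ℝ) - dD t t := by
  linarith [dD_succ_self_sub_dD_self_lt_two ht]
end
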